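/- A finite word w is rich if and only if every factor u of w contains exactly |u| + 1 distinct palindromic factors. -/

import Mathlib

/-!
Appending a letter to a word creates at most one new palindromic factor: a new palindrome must be
a suffix, and of two palindromic suffixes the shorter one is also a proper prefix of the longer,
hence already occurs before the last letter. So every word `w` has at most `|w| + 1` palindromic
factors, and counting shows that richness passes from `v ++ [a]` to `v`, hence to all prefixes.
Palindromic factors are invariant under reversal, so richness also passes to suffixes, hence to
all factors.
-/

/-- The finset of (distinct) palindromic factors of a finite word `w`,
including the empty word. -/
def palFactors {A : Type*} [DecidableEq A] (w : List A) : Finset (List A) :=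
  ((w.inits.flatMap List.tails).filter (fun u => u.reverse = u)).toFinset

/-- A finite word `w` is rich if it has exactly `|w| + 1` distinct palindromic factors. -/
def Rich {A : Type*} [DecidableEq A] (w : List A) : Prop :=
  (palFactors w).card = w.length + 1

open List

theorem infix_of_palindromic_suffix_length_lt {α : Type*} {x y v : List α} {a : α}
    (hx : x <:+ v ++ [a]) (hy : y <:+ v ++ [a]) (hxp : x.reverse = x) (hyp : y.reverse = y)
    (hlt : x.length < y.length) : x <:+: v := by
  have hxy : x <+: y := by
    simpa [hxp, hyp] using (suffix_of_suffix_length_le hx hy hlt.le).reverse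
  obtain ⟨s, hs⟩ := hy
  rcases prefix_concat_iff.1 (hs ▸ (prefix_append_right_inj s).2 hxy) with h | h
  · have := congrArg length (h.trans hs.symm)
    simp only [length_append] at this
    omega
  · exact infix_append_right.trans h.isInfix

section

variable {A : Type*} [DecidableEq A]

theorem mem_palFactors {w u : List A} : u ∈ palFactors w ↔ u <:+: w ∧ u.reverse = u := by
  simp only [palFactors, mem_toFinset, mem_filter, mem_flatMap, mem_inits, mem_tails,
    decide_eq_true_eq, infix_iff_suffix_prefix]
  exact and_congr_left' (exists_congr fun _ => and_comm)

theorem palFactors_nil : palFactors ([] : List A) = {[]} := by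
  ext u
  simp +contextual [mem_palFactors, infix_nil]

theorem palFactors_reverse (w : List A) : palFactors w.reverse = palFactors w := by
  ext u
  rw [mem_palFactors, mem_palFactors, and_congr_left_iff]
  intro hu
  rw [← reverse_infix, hu, reverse_reverse]

theorem card_palFactors_concat_sdiff_le_one (v : List A) (a : A) :
    (palFactors (v ++ [a]) \ palFactors v).card ≤ 1 := by
  have hnew : ∀ x ∈ palFactors (v ++ [a]) \ palFactors v,
      x <:+ v ++ [a] ∧ x.reverse = x ∧ ¬ x <:+: v := by
    intro x hx
    simp only [Finset.mem_sdiff, mem_palFactors, infix_concat_iff, not_and] at hx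
    obtain ⟨⟨hsuf | hinf, hpal⟩, hnew⟩ := hx
    · exact ⟨hsuf, hpal, fun hinf => hnew hinf hpal⟩
    · exact absurd hpal (hnew hinf)
  refine Finset.card_le_one.2 fun x hx y hy => ?_
  obtain ⟨hxs, hxp, hxv⟩ := hnew x hx
  obtain ⟨hys, hyp, hyv⟩ := hnew y hy
  rcases lt_trichotomy x.length y.length with h | h | h
  · exact absurd (infix_of_palindromic_suffix_length_lt hxs hys hxp hyp h) hxv
  · exact (suffix_of_suffix_length_le hxs hys h.le).eq_of_length h
  · exact absurd (infix_of_palindromic_suffix_length_lt hys hxs hyp hxp h) hyv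

theorem card_palFactors_concat_le (v : List A) (a : A) :
    (palFactors (v ++ [a])).card ≤ (palFactors v).card + 1 := by
  have := card_palFactors_concat_sdiff_le_one v a
  have := Finset.card_le_card_sdiff_add_card (s := palFactors (v ++ [a])) (t := palFactors v)
  omega

theorem card_palFactors_le (w : List A) : (palFactors w).card ≤ w.length + 1 := by
  induction w using reverseRecOn with
  | nil => simp [palFactors_nil]
  | append_singleton v a ih =>
    have := card_palFactors_concat_le v a
    simp only [length_append, length_singleton]
    omega

theorem Rich.of_concat {v : List A} {a : A} (h : Rich (v ++ [a])) : Rich v := by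
  have := card_palFactors_concat_le v a
  have := card_palFactors_le v
  unfold Rich at h ⊢
  simp only [length_append, length_singleton] at h
  omega

theorem Rich.isPrefix {w p : List A} (hw : Rich w) (hp : p <+: w) : Rich p := by
  induction w using reverseRecOn with
  | nil => rwa [prefix_nil.1 hp]
  | append_singleton v a ih =>
    rcases prefix_concat_iff.1 hp with rfl | hp
    · exact hw
    · exact ih hw.of_concat hp

theorem rich_reverse_iff {w : List A} : Rich w.reverse ↔ Rich w := by
  rw [Rich, Rich, palFactors_reverse, length_reverse]

theorem Rich.isSuffix {w s : List A} (hw : Rich w) (hs : s <:+ w) : Rich s :=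
  rich_reverse_iff.1 ((rich_reverse_iff.2 hw).isPrefix hs.reverse)

theorem Rich.isInfix {w u : List A} (hw : Rich w) (hu : u <:+: w) : Rich u := by
  obtain ⟨t, hut, htw⟩ := infix_iff_suffix_prefix.1 hu
  exact (hw.isPrefix htw).isSuffix hut

end

/-- A finite word `w` is rich if and only if every factor `u` of `w` contains
exactly `|u| + 1` distinct palindromic factors. -/
theorem rich_iff_all_factors_full_palindromic_complexity {A : Type*} [DecidableEq A]
    (w : List A) :
    Rich w ↔ ∀ u : List A, u <:+: w → (palFactors u).card = u.length + 1 :=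
  ⟨fun hw _ hu => hw.isInfix hu, fun h => h w (infix_refl w)⟩
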